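/- Let p be a real polynomial of degree n ≥ 2 with only real zeroes, d ≥ 2 distinct zeroes, and let κ > (n−1)/n. Then F_κ[p] = p·p'' − κ(p')² has exactly 2d − 2 non-real zeroes counted with multiplicity. -/

import Mathlib

/-!
Off the roots of a real-rooted `p` of degree `n`, with `S₁ = ∑ 1/(x - r)` and
`S₂ = ∑ 1/(x - r)²` over the roots, one has `p'/p = S₁` and `p''/p = S₁² - S₂`, so
`F_κ[p](x) = p(x)² ((1 - κ) S₁² - S₂)`. Cauchy–Schwarz gives `S₁² ≤ n S₂`, and `κ > (n-1)/n`
makes this negative: the only real zeroes of `F_κ[p]` are the roots of `p`. A root of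
multiplicity `m` is a zero of `F_κ[p]` of multiplicity exactly `2m - 2`, because the lowest
coefficients of `p p''` and `κ p'²` there are `m(m-1)` and `κ m²` times the same quantity.
As `deg F_κ[p] = 2n - 2`, the remaining `2n - 2 - ∑ (2m - 2) = 2d - 2` zeroes are non-real.
-/

open Polynomial

theorem Multiset.sq_sum_le_card_mul_sum_sq {R : Type*} [Field R] [LinearOrder R]
    [IsStrictOrderedRing R] (s : Multiset R) :
    s.sum ^ 2 ≤ Multiset.card s * (s.map (· ^ 2)).sum := by
  induction s using Multiset.induction_on with
  | empty => simp
  | cons a s ih =>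
    rcases s.empty_or_exists_mem with rfl | ⟨b, hb⟩
    · simp
    have hcard : (1 : R) ≤ Multiset.card s := by
      exact_mod_cast Multiset.card_pos_iff_exists_mem.mpr ⟨b, hb⟩
    simp only [Multiset.sum_cons, Multiset.map_cons, Multiset.card_cons, Nat.cast_succ]
    nlinarith [sq_nonneg (Multiset.card s * a - s.sum)]

theorem Multiset.card_eq_two_mul_card_sub_of_count_eq {α : Type*} [DecidableEq α]
    {s t : Multiset α} (hts : ∀ a ∈ t, a ∈ s) (hcount : ∀ a ∈ s, t.count a = 2 * s.count a - 2) :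
    Multiset.card t = 2 * Multiset.card s - 2 * s.toFinset.card := by
  have hsub : t.toFinset ⊆ s.toFinset := fun a ha ↦ by simpa using hts a (by simpa using ha)
  have hpos : ∀ a ∈ s.toFinset, 2 ≤ 2 * s.count a := fun a ha ↦ by
    have := Multiset.count_pos.mpr (Multiset.mem_toFinset.mp ha); omega
  rw [← Multiset.toFinset_sum_count_eq t, ← Multiset.toFinset_sum_count_eq s,
    Finset.sum_subset hsub fun a _ ha ↦ Multiset.count_eq_zero.mpr (by simpa using ha),
    Finset.sum_congr rfl fun a ha ↦ hcount a (Multiset.mem_toFinset.mp ha),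
    Finset.sum_tsub_distrib _ hpos, ← Finset.mul_sum, Finset.sum_const, smul_eq_mul]
  omega

theorem sub_one_lt_mul_of_sub_one_div_lt {R : Type*} [Field R] [LinearOrder R]
    [IsStrictOrderedRing R] {m n : ℕ} (hm : 0 < m) (hmn : m ≤ n) {κ : R}
    (hκ : ((n : R) - 1) / n < κ) : (m : R) - 1 < κ * m := by
  have hn : (0 : R) < n := by exact_mod_cast hm.trans_le hmn
  have hm' : (0 : R) < m := by exact_mod_cast hm
  have hmn' : (m : R) ≤ n := by exact_mod_cast hmn
  rw [div_lt_iff₀ hn] at hκ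
  nlinarith

namespace Polynomial

noncomputable def fKappa {R : Type*} [CommRing R] (κ : R) (p : R[X]) : R[X] :=
  p * derivative (derivative p) - C κ * derivative p ^ 2

variable {K : Type*} [Field K]

theorem eval_derivative_derivative_multiset_prod_X_sub_C (s : Multiset K) {x : K} (hx : x ∉ s) :
    eval x (derivative (derivative (s.map fun r ↦ X - C r).prod)) =
      eval x (s.map fun r ↦ X - C r).prod *
        ((s.map fun r ↦ 1 / (x - r)).sum ^ 2 - (s.map fun r ↦ (1 / (x - r)) ^ 2).sum) := by
  induction s using Multiset.induction_on with
  | empty => simp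
  | cons a s ih =>
    set Q := (s.map fun r ↦ X - C r).prod
    have hxa : x - a ≠ 0 := sub_ne_zero.mpr fun h ↦ hx (h ▸ Multiset.mem_cons_self _ _)
    have hxs : x ∉ s := fun h ↦ hx (Multiset.mem_cons_of_mem h)
    have hQ : eval x Q ≠ 0 := by
      simpa [Q, eval_multiset_prod, Multiset.prod_eq_zero_iff, sub_eq_zero] using hxs
    have hQ' : eval x (derivative Q) = eval x Q * (s.map fun r ↦ 1 / (x - r)).sum := by
      have hsplit : Q.Splits := Splits.multisetProd fun f hf ↦ by
        obtain ⟨r, -, rfl⟩ := Multiset.mem_map.mp hf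
        exact Splits.X_sub_C r
      rw [hsplit.eval_derivative_eq_eval_mul_sum hQ, roots_multiset_prod_X_sub_C]
    have hd2 : derivative (derivative ((X - C a) * Q)) =
        2 * derivative Q + (X - C a) * derivative (derivative Q) := by
      simp only [derivative_mul, derivative_X_sub_C, one_mul, derivative_add]
      ring
    rw [Multiset.map_cons, Multiset.prod_cons, hd2]
    simp only [Multiset.map_cons, Multiset.sum_cons, eval_add, eval_mul, eval_sub, eval_X, eval_C,
      eval_ofNat, hQ', ih hxs]
    field_simp
    ring

theorem Splits.eval_derivative_derivative_eq_eval_mul_sum {f : K[X]} (hf : f.Splits) {x : K}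
    (hx : f.eval x ≠ 0) :
    f.derivative.derivative.eval x = f.eval x *
      ((f.roots.map fun z ↦ 1 / (x - z)).sum ^ 2 -
        (f.roots.map fun z ↦ (1 / (x - z)) ^ 2).sum) := by
  have hxr : x ∉ f.roots := fun h ↦ hx (isRoot_of_mem_roots h)
  have hf' := hf.eq_prod_roots
  set s := f.roots
  rw [hf']
  simp only [derivative_C_mul, eval_mul, eval_C,
    eval_derivative_derivative_multiset_prod_X_sub_C _ hxr, mul_assoc]

section CharZero

variable [CharZero K]

theorem natDegree_fKappa {p : K[X]} (hp : 2 ≤ p.natDegree) {κ : K}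
    (hκ : κ * p.natDegree ≠ p.natDegree - 1) :
    (fKappa κ p).natDegree = 2 * p.natDegree - 2 := by
  obtain ⟨m, hm⟩ : ∃ m, p.natDegree = m + 2 := ⟨_, (Nat.sub_add_cancel hp).symm⟩
  rw [hm] at hκ ⊢
  have h₁ : (derivative p).natDegree ≤ m + 1 := (natDegree_derivative_le p).trans (by omega)
  have h₂ : (derivative (derivative p)).natDegree ≤ m :=
    (natDegree_derivative_le _).trans (by omega)
  have hc₁ : (derivative p).coeff (m + 1) = p.leadingCoeff * (m + 2) := by
    rw [coeff_derivative, leadingCoeff, hm]; push_cast; ring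
  have hc₂ : (derivative (derivative p)).coeff m = p.leadingCoeff * (m + 2) * (m + 1) := by
    rw [coeff_derivative, hc₁]
  have hcoeff : (fKappa κ p).coeff (2 * (m + 2) - 2) =
      p.leadingCoeff ^ 2 * (m + 2) * ((m + 1) - κ * (m + 2)) := by
    rw [fKappa, coeff_sub, coeff_C_mul, show 2 * (m + 2) - 2 = (m + 2) + m by omega,
      coeff_mul_add_eq_of_natDegree_le hm.le h₂, show (m + 2) + m = 2 * (m + 1) by omega,
      coeff_pow_of_natDegree_le h₁, hc₂, hc₁, leadingCoeff, hm]
    ring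
  refine natDegree_eq_of_le_of_coeff_ne_zero ?_ ?_
  · refine (natDegree_sub_le _ _).trans (max_le ?_ ?_)
    · exact natDegree_mul_le_of_le hm.le h₂ |>.trans (by omega)
    · exact (natDegree_C_mul_le _ _).trans (natDegree_pow_le_of_le 2 h₁ |>.trans (by omega))
  · rw [hcoeff]
    have hlc : p.leadingCoeff ≠ 0 :=
      leadingCoeff_ne_zero.mpr (ne_zero_of_natDegree_gt (n := 0) (by omega))
    refine mul_ne_zero (mul_ne_zero (pow_ne_zero 2 hlc) (by exact_mod_cast (m + 1).succ_ne_zero)) ?_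
    simp only [Nat.cast_add_one, add_sub_cancel_right] at hκ
    exact sub_ne_zero.mpr fun h ↦ hκ (by linear_combination -h)

theorem rootMultiplicity_fKappa {p : K[X]} (hp : p ≠ 0) {r : K} (hr : p.IsRoot r) {κ : K}
    (hκ : κ * p.rootMultiplicity r ≠ p.rootMultiplicity r - 1) :
    (fKappa κ p).rootMultiplicity r = 2 * p.rootMultiplicity r - 2 := by
  obtain ⟨q, hq, hqr⟩ := p.exists_eq_pow_rootMultiplicity_mul_and_not_dvd hp r
  obtain ⟨k, hk⟩ : ∃ k, p.rootMultiplicity r = k + 1 :=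
    ⟨_, (Nat.succ_pred_eq_of_pos ((rootMultiplicity_pos hp).mpr hr)).symm⟩
  rw [hk] at hq hκ ⊢
  simp only [Nat.cast_add_one, add_sub_cancel_right] at hκ
  set F := fKappa κ p
  set s : K[X] := X - C r
  set A := C ((k : K) + 1) * q + s * derivative q
  set G := q * (C (k : K) * A + s * derivative A) - C κ * A ^ 2
  have hp' : derivative p = s ^ k * A := by
    rw [hq, derivative_mul, derivative_pow_succ, derivative_X_sub_C]
    ring
  -- Multiplied by `s`, so that it also holds for `k = 0` (no `s ^ (k - 1)` with truncated `k - 1`).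
  have hsp'' : s * derivative (derivative p) = s ^ k * (C (k : K) * A + s * derivative A) := by
    rw [hp', derivative_mul]
    rcases k with _ | j
    · simp
    · rw [derivative_pow_succ, derivative_X_sub_C]
      push_cast
      ring
  have hFs : F * s = G * s ^ (2 * k + 1) := by
    simp only [F, fKappa]
    linear_combination p * hsp'' + s ^ k * (C (k : K) * A + s * derivative A) * hq -
      C κ * s * (derivative p + s ^ k * A) * hp'
  have hGr : G.eval r ≠ 0 := by
    have hqr' : q.eval r ≠ 0 := fun h ↦ hqr (dvd_iff_isRoot.mpr h)
    have hG : G.eval r = q.eval r ^ 2 * (k + 1) * (k - κ * (k + 1)) := by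
      simp only [G, A, s, eval_sub, eval_add, eval_mul, eval_pow, eval_C, eval_X, sub_self]
      ring
    rw [hG]
    exact mul_ne_zero (mul_ne_zero (pow_ne_zero 2 hqr') (by exact_mod_cast k.succ_ne_zero))
      (sub_ne_zero.mpr fun h ↦ hκ h.symm)
  have hG0 : G ≠ 0 := fun h ↦ hGr (by simp [h])
  have hF0 : F ≠ 0 := fun h ↦ by simp [h, hG0, s, X_sub_C_ne_zero] at hFs
  have h₁ := rootMultiplicity_mul_X_sub_C_pow (a := r) (n := 1) hF0
  have h₂ := rootMultiplicity_mul_X_sub_C_pow (a := r) (n := 2 * k + 1) hG0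
  rw [pow_one, hFs, h₂, rootMultiplicity_eq_zero hGr] at h₁
  omega

end CharZero

section LinearOrderedField

variable {R : Type*} [Field R] [LinearOrder R] [IsStrictOrderedRing R]

theorem Splits.eval_fKappa_neg {f : R[X]} (hf : f.Splits) (hdeg : f.natDegree ≠ 0) {κ : R}
    (hκ : (f.natDegree : R) - 1 < κ * f.natDegree) {x : R} (hx : f.eval x ≠ 0) :
    (fKappa κ f).eval x < 0 := by
  set S₁ := (f.roots.map fun z ↦ 1 / (x - z)).sum
  set S₂ := (f.roots.map fun z ↦ (1 / (x - z)) ^ 2).sum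
  have heval : (fKappa κ f).eval x = f.eval x ^ 2 * ((1 - κ) * S₁ ^ 2 - S₂) := by
    simp only [fKappa, eval_sub, eval_mul, eval_pow, eval_C, hf.eval_derivative_eq_eval_mul_sum hx,
      hf.eval_derivative_derivative_eq_eval_mul_sum hx]
    ring
  have hCS : S₁ ^ 2 ≤ f.natDegree * S₂ := by
    have := (f.roots.map fun z ↦ 1 / (x - z)).sq_sum_le_card_mul_sum_sq
    rwa [Multiset.map_map, Multiset.card_map, ← hf.natDegree_eq_card_roots] at this
  have hS₂ : 0 < S₂ := by
    have hne : x ∉ f.roots := fun h ↦ hx (isRoot_of_mem_roots h)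
    simpa using Multiset.sum_lt_sum_of_nonempty (f := fun _ ↦ (0 : R))
      (hf.roots_ne_zero hdeg) fun z hz ↦ by
        have : x - z ≠ 0 := sub_ne_zero.mpr fun h ↦ hne (h ▸ hz)
        positivity
  rw [heval]
  refine mul_neg_of_pos_of_neg (by positivity) ?_
  rcases le_or_gt κ 1 with hκ₁ | hκ₁
  · nlinarith [mul_le_mul_of_nonneg_left hCS (sub_nonneg.mpr hκ₁), mul_pos (sub_pos.mpr hκ) hS₂]
  · nlinarith [sq_nonneg S₁]

theorem Splits.card_roots_fKappa {p : R[X]} (hp : p.Splits) (hdeg : p.natDegree ≠ 0) {κ : R}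
    (hκ : ((p.natDegree : R) - 1) / p.natDegree < κ) :
    Multiset.card (fKappa κ p).roots = 2 * Multiset.card p.roots - 2 * p.roots.toFinset.card := by
  have hp0 : p ≠ 0 := fun h ↦ hdeg (by simp [h])
  refine Multiset.card_eq_two_mul_card_sub_of_count_eq (fun r hr ↦ ?_) (fun r hr ↦ ?_)
  · by_contra hpr
    exact (hp.eval_fKappa_neg hdeg (sub_one_lt_mul_of_sub_one_div_lt (by omega) le_rfl hκ)
      fun h ↦ hpr ((mem_roots hp0).mpr h)).ne (isRoot_of_mem_roots hr)
  · have hm : p.rootMultiplicity r ≤ p.natDegree := by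
      rw [← count_roots]
      exact (Multiset.count_le_card r p.roots).trans p.card_roots'
    rw [count_roots, count_roots]
    exact rootMultiplicity_fKappa hp0 (isRoot_of_mem_roots hr)
      (sub_one_lt_mul_of_sub_one_div_lt ((rootMultiplicity_pos hp0).mpr (isRoot_of_mem_roots hr))
        hm hκ).ne'

end LinearOrderedField

theorem roots_map_complex_filter_im_eq_zero (q : ℝ[X]) :
    (q.map (algebraMap ℝ ℂ)).roots.filter (fun z ↦ z.im = 0) = q.roots.map Complex.ofReal := by
  ext z
  rw [Multiset.count_filter]
  split_ifs with hz
  · obtain ⟨x, rfl⟩ : ∃ x : ℝ, (x : ℂ) = z := ⟨z.re, Complex.ext rfl (by simp [hz])⟩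
    rw [Multiset.count_map_eq_count' _ _ Complex.ofReal_injective, count_roots, count_roots]
    exact (eq_rootMultiplicity_map (algebraMap ℝ ℂ).injective x).symm
  · refine (Multiset.count_eq_zero.mpr fun hz' ↦ hz ?_).symm
    obtain ⟨x, -, rfl⟩ := Multiset.mem_map.mp hz'
    exact Complex.ofReal_im x

theorem card_roots_map_complex_filter_im_ne_zero (q : ℝ[X]) :
    Multiset.card ((q.map (algebraMap ℝ ℂ)).roots.filter (fun z ↦ z.im ≠ 0)) =
      q.natDegree - Multiset.card q.roots := by
  have hall : Multiset.card (q.map (algebraMap ℝ ℂ)).roots = q.natDegree := by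
    rw [splits_iff_card_roots.mp (IsAlgClosed.splits _),
      natDegree_map_eq_of_injective (algebraMap ℝ ℂ).injective]
  have hsum := congrArg Multiset.card
    (Multiset.filter_add_not (fun z : ℂ ↦ z.im = 0) (q.map (algebraMap ℝ ℂ)).roots)
  simp only [← ne_eq] at hsum
  rw [Multiset.card_add, roots_map_complex_filter_im_eq_zero, Multiset.card_map, hall] at hsum
  omega

theorem splits_of_forall_isRoot_map_complex_im_eq_zero {q : ℝ[X]}
    (h : ∀ z : ℂ, (q.map (algebraMap ℝ ℂ)).IsRoot z → z.im = 0) : q.Splits := by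
  have hnonreal := card_roots_map_complex_filter_im_ne_zero q
  rw [Multiset.filter_eq_nil.mpr fun z hz ↦ not_not.mpr (h z (isRoot_of_mem_roots hz)),
    Multiset.card_zero] at hnonreal
  exact splits_iff_card_roots.mpr (le_antisymm q.card_roots' (by omega))

end Polynomial

open scoped Classical in
theorem count_nonreal_roots_F_kappa_gt_general (p : ℝ[X]) (n d : ℕ) (hn : p.natDegree = n)
    (hn2 : 2 ≤ n)
    (hreal : ∀ z : ℂ, (p.map (algebraMap ℝ ℂ)).IsRoot z → z.im = 0)
    (hd : p.roots.toFinset.card = d)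
    (κ : ℝ) (hκ : ((n : ℝ) - 1) / n < κ) :
    Multiset.card
      (((p * derivative (derivative p) - C κ * (derivative p) ^ 2).map
          (algebraMap ℝ ℂ)).roots.filter (fun z => z.im ≠ 0)) = 2 * d - 2 := by
  have hsplit := splits_of_forall_isRoot_map_complex_im_eq_zero hreal
  have hroots : Multiset.card p.roots = n := hn ▸ hsplit.natDegree_eq_card_roots.symm
  have hdeg := natDegree_fKappa (hn ▸ hn2)
    (hn ▸ sub_one_lt_mul_of_sub_one_div_lt (by omega) le_rfl hκ).ne'
  have hFroots := hsplit.card_roots_fKappa (by omega) (hn ▸ hκ)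
  have hdn : d ≤ n := hd ▸ hroots ▸ Multiset.toFinset_card_le _
  change Multiset.card (((fKappa κ p).map _).roots.filter _) = _
  rw [card_roots_map_complex_filter_im_ne_zero, hdeg, hFroots, hroots, hd, hn]
  omega

open scoped Classical in
/-- Let `p` be a real polynomial of degree `n ≥ 2` with only real zeroes and `d ≥ 2`
distinct zeroes, and `κ > (n−1)/n`. Then `F_κ[p] = p·p'' − κ(p')²` has exactly
`2d − 2` non-real zeroes counted with multiplicity. -/
theorem count_nonreal_roots_F_kappa_gt (p : ℝ[X]) (n d : ℕ) (hn : p.natDegree = n)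
    (hn2 : 2 ≤ n)
    (hreal : ∀ z : ℂ, (p.map (algebraMap ℝ ℂ)).IsRoot z → z.im = 0)
    (hd : p.roots.toFinset.card = d) (hd2 : 2 ≤ d)
    (κ : ℝ) (hκ : ((n : ℝ) - 1) / n < κ) :
    Multiset.card
      (((p * derivative (derivative p) - C κ * (derivative p) ^ 2).map
          (algebraMap ℝ ℂ)).roots.filter (fun z => z.im ≠ 0)) = 2 * d - 2 :=
  count_nonreal_roots_F_kappa_gt_general p n d hn hn2 hreal hd κ hκ
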